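/- arXiv:0707.2591 — 3 statements merged into one kernel-verified Lean document; each statement's English description precedes it below -/
import Mathlib

section
/- Given a tropical polynomial f with coefficients a_r, ..., a_n ∈ ℚ, define b_j = min( {a_j} ∪ { (a_i·(k−j) + a_k·(j−i))/(k−i) : r ≤ i < j < k ≤ n } ). Then every b_j is a least coefficient of the polynomial g with coefficients b_r, ..., b_n: for each j there exists x₀ ∈ ℚ such that min_i (b_i + i·x₀) = b_j + j·x₀. -/
/-!
The formula makes `b j` the value at `j` of the lower convex envelope of the points `(i, a i)`:
`b j` lies on or below every chord over `j`. Hence every slope from a point left of `(j, b j)`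
to it is at most every slope from it to a point on its right, so some line through `(j, b j)`
stays below all points `(i, a i)`. A line below all `(i, a i)` is also below every chord, hence
below all `(i, b i)`, and this line makes `b j + j * x₀` the minimum.
-/

theorem Finset.exists_between_of_forall_le {α : Type*} [LinearOrder α] [Nonempty α]
    {L U : Finset α} (h : ∀ l ∈ L, ∀ u ∈ U, l ≤ u) :
    ∃ x, (∀ l ∈ L, l ≤ x) ∧ ∀ u ∈ U, x ≤ u := by
  by_cases hL : L.Nonempty
  · exact ⟨L.max' hL, fun l hl => L.le_max' l hl, fun u hu => h _ (L.max'_mem hL) u hu⟩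
  · rw [Finset.not_nonempty_iff_eq_empty] at hL
    subst hL
    by_cases hU : U.Nonempty
    · exact ⟨U.min' hU, by simp, fun u hu => U.min'_le u hu⟩
    · rw [Finset.not_nonempty_iff_eq_empty] at hU
      exact ⟨Classical.arbitrary α, by simp, by simp [hU]⟩

section Hull

variable {K : Type*} [Field K] [LinearOrder K]

def chord (a : ℤ → K) (i k j : ℤ) : K :=
  (a i * ((k : K) - (j : K)) + a k * ((j : K) - (i : K))) / ((k : K) - (i : K))

def lowerHull (a : ℤ → K) (s : Finset ℤ) (j : ℤ) : K :=
  (insert (a j) (((s ×ˢ s).filter (fun p => p.1 < j ∧ j < p.2)).image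
    (fun p : ℤ × ℤ => chord a p.1 p.2 j))).min' (Finset.insert_nonempty _ _)

variable {a : ℤ → K} {i j k : ℤ}

theorem lowerHull_le_self (s : Finset ℤ) (j : ℤ) : lowerHull a s j ≤ a j :=
  Finset.min'_le _ _ (Finset.mem_insert_self _ _)

theorem lowerHull_le_chord {s : Finset ℤ} (hi : i ∈ s) (hk : k ∈ s) (hij : i < j)
    (hjk : j < k) :
    lowerHull a s j ≤ chord a i k j :=
  Finset.min'_le _ _ <| Finset.mem_insert_of_mem <| Finset.mem_image.2
    ⟨(i, k), Finset.mem_filter.2 ⟨Finset.mem_product.2 ⟨hi, hk⟩, hij, hjk⟩, rfl⟩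

variable [IsStrictOrderedRing K]

theorem le_chord_add_mul_of_le (hij : i < j) (hjk : j < k) {c x : K}
    (hi : c ≤ a i + i * x) (hk : c ≤ a k + k * x) : c ≤ chord a i k j + j * x := by
  have hij' : (i : K) < j := by exact_mod_cast hij
  have hjk' : (j : K) < k := by exact_mod_cast hjk
  rw [← sub_le_iff_le_add, chord, le_div_iff₀ (by linarith)]
  nlinarith [mul_le_mul_of_nonneg_right hi (sub_nonneg.2 hjk'.le),
    mul_le_mul_of_nonneg_right hk (sub_nonneg.2 hij'.le)]

theorem le_chord_iff_slope_le (hij : i < j) (hjk : j < k) {β : K} :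
    β ≤ chord a i k j ↔ (β - a k) / (k - j) ≤ (a i - β) / (j - i) := by
  have hij' : (0 : K) < j - i := sub_pos.2 (by exact_mod_cast hij)
  have hjk' : (0 : K) < k - j := sub_pos.2 (by exact_mod_cast hjk)
  rw [chord, le_div_iff₀ (by linarith), div_le_div_iff₀ hjk' hij']
  constructor <;> intro h <;> linarith

theorem le_lowerHull_add_mul {s : Finset ℤ} (hj : j ∈ s) {c x : K}
    (hc : ∀ m ∈ s, c ≤ a m + m * x) : c ≤ lowerHull a s j + j * x := by
  rw [← sub_le_iff_le_add]
  refine Finset.le_min' _ _ _ fun y hy => ?_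
  rcases Finset.mem_insert.1 hy with rfl | hy
  · linarith [hc j hj]
  · obtain ⟨⟨i, k⟩, hp, rfl⟩ := Finset.mem_image.1 hy
    obtain ⟨hik, hij, hjk⟩ := Finset.mem_filter.1 hp
    obtain ⟨hi, hk⟩ := Finset.mem_product.1 hik
    linarith [le_chord_add_mul_of_le hij hjk (hc i hi) (hc k hk)]

theorem exists_lowerHull_add_mul_le (a : ℤ → K) (s : Finset ℤ) (j : ℤ) :
    ∃ x : K, ∀ m ∈ s, lowerHull a s j + j * x ≤ a m + m * x := by
  set β := lowerHull a s j
  obtain ⟨x, hL, hU⟩ := Finset.exists_between_of_forall_le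
    (L := (s.filter (j < ·)).image fun k => (β - a k) / (k - j))
    (U := (s.filter (· < j)).image fun i => (a i - β) / (j - i)) (by
      simp only [Finset.forall_mem_image, Finset.mem_filter]
      exact fun k ⟨hk, hjk⟩ i ⟨hi, hij⟩ =>
        (le_chord_iff_slope_le hij hjk).1 (lowerHull_le_chord hi hk hij hjk))
  refine ⟨x, fun m hm => ?_⟩
  rcases lt_trichotomy m j with hmj | rfl | hjm
  · have hmj' : (0 : K) < j - m := sub_pos.2 (by exact_mod_cast hmj)
    have := hU _ (Finset.mem_image_of_mem _ (Finset.mem_filter.2 ⟨hm, hmj⟩))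
    rw [le_div_iff₀ hmj'] at this
    linarith
  · linarith [lowerHull_le_self (a := a) s m]
  · have hjm' : (0 : K) < m - j := sub_pos.2 (by exact_mod_cast hjm)
    have := hL _ (Finset.mem_image_of_mem _ (Finset.mem_filter.2 ⟨hm, hjm⟩))
    rw [div_le_iff₀ hjm'] at this
    linarith

end Hull

/-- The least-coefficient formula produces a least-coefficient polynomial. -/
theorem lcp_formula_is_least (r n : ℤ) (hrn : r ≤ n) (a b : ℤ → ℚ)
    (hb : ∀ j ∈ Finset.Icc r n, b j =
      (insert (a j)
        ((((Finset.Icc r n) ×ˢ (Finset.Icc r n)).filter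
            (fun p => p.1 < j ∧ j < p.2)).image
          (fun p : ℤ × ℤ =>
            (a p.1 * ((p.2 : ℚ) - (j : ℚ)) + a p.2 * ((j : ℚ) - (p.1 : ℚ))) /
              ((p.2 : ℚ) - (p.1 : ℚ))))).min'
        (Finset.insert_nonempty _ _)) :
    ∀ j ∈ Finset.Icc r n, ∃ x₀ : ℚ,
      (Finset.Icc r n).inf' (Finset.nonempty_Icc.mpr hrn)
        (fun i => b i + (i : ℚ) * x₀) = b j + (j : ℚ) * x₀ := by
  replace hb : ∀ j ∈ Finset.Icc r n, b j = lowerHull a (Finset.Icc r n) j := hb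
  intro j hj
  obtain ⟨x, hx⟩ := exists_lowerHull_add_mul_le a (Finset.Icc r n) j
  refine ⟨x, le_antisymm (Finset.inf'_le _ hj) (Finset.le_inf' _ _ fun m hm => ?_)⟩
  rw [hb j hj, hb m hm]
  exact le_lowerHull_add_mul hm hx
end

section
/- Let a_r, ..., a_n ∈ ℚ satisfy the concavity condition a_{i−1} − a_i ≥ a_i − a_{i+1} for r < i < n, and set d_i = a_{i−1} − a_i. Then for all x ∈ ℚ, min_{r ≤ i ≤ n} (a_i + i·x) = a_n + r·x + Σ_{i=r+1}^{n} min(x, d_i). That is, the least-coefficient tropical polynomial factors as the tropical product of linear factors a_n ⊙ x^r ⊙ (x ⊕ d_n) ⊙ ... ⊙ (x ⊕ d_{r+1}). -/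
/-!
Induct on the top degree `n`. Adding the term `a (n + 1) + (n + 1) x` multiplies the right-hand
side by the factor `min x d` with `d = a n - a (n + 1)`, the smallest of the differences by
concavity. If `x ≤ d`, then `x` lies below every difference, so the factored expression equals the
new term `a (n + 1) + (n + 1) x`, which is then the minimum; if `d ≤ x`, the new factor contributes
`d` and the new term is not smaller than the old minimum.
-/

open Finset

lemma antitoneOn_sub_of_concave {α : Type*} [Sub α] [Preorder α] {r n : ℤ} {a : ℤ → α}
    (hconc : ∀ i : ℤ, r < i → i < n → a (i - 1) - a i ≥ a i - a (i + 1)) :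
    AntitoneOn (fun i => a (i - 1) - a i) (Set.Icc (r + 1) n) := by
  refine antitoneOn_of_add_one_le Set.ordConnected_Icc fun i _ hi hi' => ?_
  simpa only [add_sub_cancel_right] using hconc i (by linarith [hi.1]) (by linarith [hi'.2])

lemma sum_Icc_add_one_const {α : Type*} [Ring α] {r n : ℤ} (hrn : r ≤ n) (c : α) :
    ∑ _i ∈ Icc (r + 1) n, c = ((n : α) - r) * c := by
  rw [sum_const, Int.card_Icc, nsmul_eq_mul, ← Int.cast_natCast,
    Int.toNat_of_nonneg (by omega), add_sub_add_right_eq_sub, Int.cast_sub]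

theorem inf'_Icc_add_mul_eq_add_sum_min {α : Type*} [CommRing α] [LinearOrder α]
    [IsStrictOrderedRing α] {r n : ℤ} (hrn : r ≤ n) (a : ℤ → α)
    (hconc : ∀ i : ℤ, r < i → i < n → a (i - 1) - a i ≥ a i - a (i + 1)) (x : α) :
    (Icc r n).inf' (nonempty_Icc.mpr hrn) (fun i => a i + (i : α) * x) =
      a n + r * x + ∑ i ∈ Icc (r + 1) n, min x (a (i - 1) - a i) := by
  induction n, hrn using Int.leInduction with
  | base => simp
  | succ n hrn ih =>
    rw [inf'_congr _ (insert_Icc_right_eq_Icc_add_one (a := r) (by omega)).symm fun _ _ => rfl,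
      inf'_insert (nonempty_Icc.mpr hrn),
      ih fun i hi hi' => hconc i hi (by omega),
      ← insert_Icc_right_eq_Icc_add_one (by omega), sum_insert (by simp), add_sub_cancel_right]
    set S := ∑ i ∈ Icc (r + 1) n, min x (a (i - 1) - a i)
    set d := a n - a (n + 1)
    have hS_le : S ≤ ((n : α) - r) * x :=
      (sum_le_sum fun i _ => min_le_left _ _).trans (sum_Icc_add_one_const hrn x).le
    push_cast
    rcases le_total x d with hxd | hdx
    · have hd_le : ∀ i ∈ Icc (r + 1) n, d ≤ a (i - 1) - a i := fun i hi => by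
        obtain ⟨hri, hin⟩ := mem_Icc.mp hi
        simpa [d] using
          antitoneOn_sub_of_concave hconc ⟨hri, by omega⟩ ⟨by omega, le_rfl⟩ (by omega)
      have hS : S = ((n : α) - r) * x := by
        rw [← sum_Icc_add_one_const hrn x]
        exact sum_congr rfl fun i hi => min_eq_left (hxd.trans (hd_le i hi))
      rw [min_eq_left hxd, hS, min_eq_left (by linarith)]
      ring
    · rw [min_eq_right hdx, min_eq_right (by linarith)]
      ring

/-- Fundamental theorem of tropical algebra (factorization): a least-coefficient
polynomial factors into linear tropical factors with roots the consecutive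
differences. -/
theorem tropical_factorization (r n : ℤ) (hrn : r ≤ n) (a : ℤ → ℚ)
    (hconc : ∀ i : ℤ, r < i → i < n → a (i - 1) - a i ≥ a i - a (i + 1)) :
    ∀ x : ℚ,
      (Finset.Icc r n).inf' (Finset.nonempty_Icc.mpr hrn)
        (fun i => a i + (i : ℚ) * x) =
      a n + (r : ℚ) * x + ∑ i ∈ Finset.Icc (r + 1) n, min x (a (i - 1) - a i) :=
  inf'_Icc_add_mul_eq_add_sum_min hrn a hconc
end

section
/- Characterization of tropical roots: for a least-coefficient tropical polynomial with coefficients a_r, ..., a_n ∈ ℚ (satisfying a_{i−1} − a_i ≥ a_i − a_{i+1} for r < i < n), a point d ∈ ℚ lies in the tropical zero locus (the minimum of k ↦ a_k + k·d is attained at two or more indices) if and only if d ∈ {a_{i−1} − a_i : r < i ≤ n}. -/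
/-!
With `δ i = a (i - 1) - a i`, the terms satisfy
`(a m + m d) - (a (m - 1) + (m - 1) d) = d - δ m`, and concavity makes `δ` antitone.
So `m ↦ a m + m d` is discretely convex: if `d = δ i` it decreases up to `i` and increases
from `i - 1` on, whence `i - 1` and `i` are both minimisers. Conversely, two minimisers
`p < q` give `δ (p + 1) ≤ d ≤ δ q ≤ δ (p + 1)`.
-/

open Set

lemma Finset.inf'_eq_iff_isMinOn {α β : Type*} [SemilatticeInf α] {s : Finset β}
    (H : s.Nonempty) {f : β → α} {j : β} (hj : j ∈ s) :
    s.inf' H f = f j ↔ IsMinOn f s j :=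
  ⟨fun h _ hm => h ▸ Finset.inf'_le f hm,
    fun h => le_antisymm (Finset.inf'_le f hj) (Finset.le_inf' _ _ h)⟩

namespace TropicalPolynomial

lemma term_sub_term_sub_one {K : Type*} [CommRing K] (a : ℤ → K) (d : K) (m : ℤ) :
    (a m + m * d) - (a (m - 1) + ((m - 1 : ℤ) : K) * d) = d - (a (m - 1) - a m) := by
  push_cast
  ring

variable {K : Type*} [CommRing K] [LinearOrder K] [IsStrictOrderedRing K]
  {r n : ℤ} {a : ℤ → K}

lemma antitoneOn_coeff_sub
    (hconc : ∀ i : ℤ, r < i → i < n → a (i - 1) - a i ≥ a i - a (i + 1)) :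
    AntitoneOn (fun i => a (i - 1) - a i) (Ioc r n) := by
  refine antitoneOn_of_le_sub_one ordConnected_Ioc fun i _ hi hi' => ?_
  simpa using hconc (i - 1) hi'.1 (by linarith [hi.2])

lemma isMinOn_term_of_eq_coeff_sub
    (hconc : ∀ i : ℤ, r < i → i < n → a (i - 1) - a i ≥ a i - a (i + 1))
    {i : ℤ} (hi : i ∈ Ioc r n) :
    IsMinOn (fun m : ℤ => a m + m * (a (i - 1) - a i)) (Icc r n) i := by
  set d := a (i - 1) - a i
  have hδ := antitoneOn_coeff_sub hconc
  have hstep := term_sub_term_sub_one a d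
  have hdown : AntitoneOn (fun m : ℤ => a m + m * d) (Icc r i) :=
    antitoneOn_of_le_sub_one ordConnected_Icc fun m _ hm hm' => by
      have := hδ ⟨by linarith [hm'.1], by linarith [hm.2, hi.2]⟩ hi hm.2
      linarith [hstep m]
  have hup : MonotoneOn (fun m : ℤ => a m + m * d) (Icc i n) :=
    monotoneOn_of_sub_one_le ordConnected_Icc fun m _ hm hm' => by
      have := hδ hi ⟨by linarith [hi.1, hm.1], hm.2⟩ hm.1
      linarith [hstep m]
  intro m hm
  rcases le_total m i with hmi | hmi
  · exact hdown ⟨hm.1, hmi⟩ ⟨hi.1.le, le_rfl⟩ hmi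
  · exact hup ⟨le_rfl, hi.2⟩ ⟨hmi, hm.2⟩ hmi

lemma eq_coeff_sub_of_isMinOn_of_isMinOn
    (hconc : ∀ i : ℤ, r < i → i < n → a (i - 1) - a i ≥ a i - a (i + 1))
    {d : K} {p q : ℤ} (hp : p ∈ Icc r n) (hq : q ∈ Icc r n) (hpq : p < q)
    (hp_min : IsMinOn (fun m : ℤ => a m + m * d) (Icc r n) p)
    (hq_min : IsMinOn (fun m : ℤ => a m + m * d) (Icc r n) q) :
    d = a p - a (p + 1) := by
  have hp_le : a p + p * d ≤ a (p + 1) + ((p + 1 : ℤ) : K) * d :=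
    hp_min ⟨by linarith [hp.1], by linarith [hq.2]⟩
  have hq_le : a q + q * d ≤ a (q - 1) + ((q - 1 : ℤ) : K) * d :=
    hq_min ⟨by linarith [hp.1], by linarith [hq.2]⟩
  have hδ : a (q - 1) - a q ≤ a p - a (p + 1) := by
    simpa using antitoneOn_coeff_sub hconc (a := a)
      ⟨by linarith [hp.1], by linarith [hq.2]⟩ ⟨by linarith [hp.1], hq.2⟩
      (show p + 1 ≤ q by omega)
  have h₁ := term_sub_term_sub_one a d (p + 1)
  have h₂ := term_sub_term_sub_one a d q
  simp only [add_sub_cancel_right] at h₁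
  linarith

end TropicalPolynomial

open TropicalPolynomial in
/-- Characterization of the tropical zero locus of a least-coefficient
polynomial: the roots are exactly the consecutive differences. -/
theorem tropical_zero_locus_iff (r n : ℤ) (hrn : r ≤ n) (a : ℤ → ℚ)
    (hconc : ∀ i : ℤ, r < i → i < n → a (i - 1) - a i ≥ a i - a (i + 1))
    (d : ℚ) :
    (∃ j ∈ Finset.Icc r n, ∃ k ∈ Finset.Icc r n, j ≠ k ∧
      (Finset.Icc r n).inf' (Finset.nonempty_Icc.mpr hrn)
        (fun m => a m + (m : ℚ) * d) = a j + (j : ℚ) * d ∧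
      (Finset.Icc r n).inf' (Finset.nonempty_Icc.mpr hrn)
        (fun m => a m + (m : ℚ) * d) = a k + (k : ℚ) * d) ↔
    (∃ i : ℤ, r < i ∧ i ≤ n ∧ d = a (i - 1) - a i) := by
  constructor
  · rintro ⟨j, hj, k, hk, hjk, hj_min, hk_min⟩
    rw [Finset.inf'_eq_iff_isMinOn _ hj, Finset.coe_Icc] at hj_min
    rw [Finset.inf'_eq_iff_isMinOn _ hk, Finset.coe_Icc] at hk_min
    rw [Finset.mem_Icc] at hj hk
    rcases hjk.lt_or_gt with h | h
    · exact ⟨j + 1, by omega, by omega,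
        by simpa using eq_coeff_sub_of_isMinOn_of_isMinOn hconc hj hk h hj_min hk_min⟩
    · exact ⟨k + 1, by omega, by omega,
        by simpa using eq_coeff_sub_of_isMinOn_of_isMinOn hconc hk hj h hk_min hj_min⟩
  · rintro ⟨i, hri, hin, rfl⟩
    have hi : i ∈ Finset.Icc r n := Finset.mem_Icc.mpr ⟨hri.le, hin⟩
    have hi_min := isMinOn_term_of_eq_coeff_sub hconc ⟨hri, hin⟩
    rw [← Finset.coe_Icc, ← Finset.inf'_eq_iff_isMinOn (Finset.nonempty_Icc.mpr hrn) hi]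
      at hi_min
    refine ⟨i - 1, Finset.mem_Icc.mpr ⟨by omega, by omega⟩, i, hi, by omega, ?_, hi_min⟩
    rw [hi_min, ← sub_eq_zero, term_sub_term_sub_one, sub_self]
end
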